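/- arXiv:2304.13848 — 7 statements merged into one kernel-verified Lean document; each statement's English description precedes it below -/
import Mathlib

section
/- Let f and g be probability densities on S with f(x) > 0 for all x ∈ S and ρ > 0. Then δ_ρ(f,g) ≤ 1 + (1/(1+ρ)) ∫_S (g(x) − f(x))²/f(x) dx. -/
open MeasureTheory

theorem stmt_7 (d : ℕ) (S : Set (EuclideanSpace ℝ (Fin d))) (hS : MeasurableSet S)
    (f g : EuclideanSpace ℝ (Fin d) → ℝ) (ρ : ℝ) (hρ : 0 < ρ)
    (hfm : Measurable f) (hgm : Measurable g)
    (hf0 : ∀ x ∈ S, 0 < f x) (hg0 : ∀ x ∈ S, 0 ≤ g x)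
    (hfi : IntegrableOn f S) (hgi : IntegrableOn g S)
    (hf1 : ∫ x in S, f x = 1) (hg1 : ∫ x in S, g x = 1)
    (hint : IntegrableOn (fun x => (ρ * f x ^ 2 + g x ^ 2) / (ρ * f x + g x)) S)
    (hint2 : IntegrableOn (fun x => (g x - f x) ^ 2 / f x) S) :
    ∫ x in S, (ρ * f x ^ 2 + g x ^ 2) / (ρ * f x + g x) ≤
      1 + (1 / (1 + ρ)) * ∫ x in S, (g x - f x) ^ 2 / f x := by
  have hρ1 : (0:ℝ) < 1 + ρ := by linarith
  set R : EuclideanSpace ℝ (Fin d) → ℝ :=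
    fun x => (ρ * f x + g x) / (1 + ρ) + 1 / (1 + ρ) * ((g x - f x) ^ 2 / f x) with hR
  have hRint : IntegrableOn R S := by
    exact (((hfi.const_mul ρ).add hgi).div_const (1 + ρ)).add (hint2.const_mul _)
  have key : ∀ x ∈ S, (ρ * f x ^ 2 + g x ^ 2) / (ρ * f x + g x) ≤ R x := by
    intro x hx
    have ha := hf0 x hx
    have hb := hg0 x hx
    have hd : 0 < ρ * f x + g x := by positivity
    simp only [hR]
    rw [div_le_iff₀ hd]
    have h1 : (ρ * f x + g x) / (1 + ρ) + 1 / (1 + ρ) * ((g x - f x) ^ 2 / f x)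
        = ((ρ * f x + g x) * f x + (g x - f x) ^ 2) / ((1 + ρ) * f x) := by
      field_simp
    rw [h1, div_mul_eq_mul_div, le_div_iff₀ (by positivity)]
    nlinarith [sq_nonneg (g x - f x), mul_nonneg (sq_nonneg (g x - f x)) hb, ha.le, hd.le]
  have hmono : ∫ x in S, (ρ * f x ^ 2 + g x ^ 2) / (ρ * f x + g x) ≤ ∫ x in S, R x :=
    setIntegral_mono_on hint hRint hS key
  have ha1 : IntegrableOn (fun x => (ρ * f x + g x) / (1 + ρ)) S :=
    ((hfi.const_mul ρ).add hgi).div_const (1 + ρ)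
  have ha2 : IntegrableOn (fun x => 1 / (1 + ρ) * ((g x - f x) ^ 2 / f x)) S :=
    hint2.const_mul _
  have ha3 : IntegrableOn (fun x => ρ * f x) S := hfi.const_mul ρ
  have hRval : ∫ x in S, R x = 1 + (1 / (1 + ρ)) * ∫ x in S, (g x - f x) ^ 2 / f x := by
    simp only [hR]
    rw [integral_add ha1 ha2, integral_const_mul]
    have : ∫ x in S, (ρ * f x + g x) / (1 + ρ) = 1 := by
      rw [integral_div, integral_add ha3 hgi, integral_const_mul, hf1, hg1]
      field_simp
      ring
    rw [this]
  rw [← hRval]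
  exact hmono
end

section
/- Let f₁,…,f_K be probability densities on S that are strictly positive on S, let w₁,…,w_K be mixing weights with w_a > L > 0 and Σ_a w_a = 1, and let λ₁,…,λ_K ∈ [0,1] with Σ_a λ_a = 1. Set f_X = Σ_a w_a f_a and f_Y = Σ_a λ_a f_a. Then for any ρ > 0, the Henze-Penrose divergence satisfies δ_ρ(f_X, f_Y) ≤ 1 + (1+ρ)K²/(Lρ²). -/
open MeasureTheory

theorem stmt_10 (d K : ℕ) (hK : 0 < K) (S : Set (EuclideanSpace ℝ (Fin d)))
    (hS : MeasurableSet S)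
    (f : Fin K → EuclideanSpace ℝ (Fin d) → ℝ)
    (w lam : Fin K → ℝ) (L ρ : ℝ) (hL : 0 < L) (hρ : 0 < ρ)
    (hfm : ∀ a, Measurable (f a))
    (hf0 : ∀ a, ∀ x ∈ S, 0 < f a x)
    (hfi : ∀ a, IntegrableOn (f a) S)
    (hf1 : ∀ a, ∫ x in S, f a x = 1)
    (hw : ∀ a, L < w a) (hw1 : ∑ a, w a = 1)
    (hlam : ∀ a, lam a ∈ Set.Icc (0:ℝ) 1) (hlam1 : ∑ a, lam a = 1)
    (hint : IntegrableOn (fun x =>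
      (ρ * (∑ a, w a * f a x) ^ 2 + (∑ a, lam a * f a x) ^ 2) /
        (ρ * (∑ a, w a * f a x) + (∑ a, lam a * f a x))) S) :
    ∫ x in S, (ρ * (∑ a, w a * f a x) ^ 2 + (∑ a, lam a * f a x) ^ 2) /
        (ρ * (∑ a, w a * f a x) + (∑ a, lam a * f a x)) ≤
      1 + (1 + ρ) * (K : ℝ) ^ 2 / (L * ρ ^ 2) := by
  have hKr : (1:ℝ) ≤ (K:ℝ) := by exact_mod_cast hK
  -- integrability of the majorant
  have hφi : IntegrableOn
      (fun x => (∑ a, w a * f a x) + (∑ c, f c x) / (ρ * L)) S := by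
    apply Integrable.add
    · exact integrable_finset_sum _ (fun a _ => (hfi a).const_mul (w a))
    · exact (integrable_finset_sum _ (fun a _ => hfi a)).div_const _
  have hmono : ∫ x in S, (ρ * (∑ a, w a * f a x) ^ 2 + (∑ a, lam a * f a x) ^ 2) /
        (ρ * (∑ a, w a * f a x) + (∑ a, lam a * f a x)) ≤
      ∫ x in S, ((∑ a, w a * f a x) + (∑ c, f c x) / (ρ * L)) := by
    apply setIntegral_mono_on hint hφi hS
    intro x hx
    set a := ∑ c, w c * f c x with ha
    set b := ∑ c, lam c * f c x with hb
    set T := ∑ c, f c x with hT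
    have hTpos : 0 < T := Finset.sum_pos (fun c _ => hf0 c x hx)
      (Finset.univ_nonempty_iff.2 ⟨⟨0, hK⟩⟩)
    have haLT : L * T ≤ a := by
      rw [hT, Finset.mul_sum]
      exact Finset.sum_le_sum fun c _ =>
        mul_le_mul_of_nonneg_right (hw c).le (hf0 c x hx).le
    have hapos : 0 < a := lt_of_lt_of_le (by positivity) haLT
    have hbT : b ≤ T :=
      Finset.sum_le_sum fun c _ => by
        nlinarith [(hlam c).2, (hf0 c x hx).le, (hlam c).1]
    have hb0 : 0 ≤ b := Finset.sum_nonneg fun c _ =>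
      mul_nonneg (hlam c).1 (hf0 c x hx).le
    have h1 : (ρ * a ^ 2 + b ^ 2) / (ρ * a + b) ≤ (ρ * a ^ 2 + b ^ 2) / (ρ * a) :=
      div_le_div_of_nonneg_left (by positivity) (by positivity) (by linarith)
    have h2 : (ρ * a ^ 2 + b ^ 2) / (ρ * a) = a + b ^ 2 / (ρ * a) := by
      field_simp
    have h3 : b ^ 2 / (ρ * a) ≤ T / (ρ * L) := by
      have : b ^ 2 / (ρ * a) ≤ T ^ 2 / (ρ * (L * T)) :=
        div_le_div₀ (by positivity) (by nlinarith) (by positivity)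
          (by nlinarith)
      calc b ^ 2 / (ρ * a) ≤ T ^ 2 / (ρ * (L * T)) := this
        _ = T / (ρ * L) := by field_simp
    calc (ρ * a ^ 2 + b ^ 2) / (ρ * a + b) ≤ (ρ * a ^ 2 + b ^ 2) / (ρ * a) := h1
      _ = a + b ^ 2 / (ρ * a) := h2
      _ ≤ a + T / (ρ * L) := by linarith
  have hval : ∫ x in S, ((∑ a, w a * f a x) + (∑ c, f c x) / (ρ * L))
      = 1 + (K : ℝ) / (ρ * L) := by
    rw [integral_add (integrable_finset_sum _ (fun a _ => (hfi a).const_mul (w a)))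
      ((integrable_finset_sum _ (fun a _ => hfi a)).div_const _)]
    have e1 : ∫ x in S, (∑ a, w a * f a x) = 1 := by
      rw [integral_finset_sum _ (fun a _ => (hfi a).const_mul (w a))]
      simp_rw [integral_const_mul, hf1]
      simpa using hw1
    have e2 : ∫ x in S, (∑ c, f c x) / (ρ * L) = (K : ℝ) / (ρ * L) := by
      rw [integral_div, integral_finset_sum _ (fun a _ => hfi a)]
      simp [hf1]
    rw [e1, e2]
  have hfinal : 1 + (K : ℝ) / (ρ * L) ≤ 1 + (1 + ρ) * (K : ℝ) ^ 2 / (L * ρ ^ 2) := by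
    have : (K : ℝ) / (ρ * L) ≤ (1 + ρ) * (K : ℝ) ^ 2 / (L * ρ ^ 2) := by
      rw [div_le_div_iff₀ (by positivity) (by positivity)]
      have h1 : ρ * (K:ℝ) ≤ (1 + ρ) * (K:ℝ) ^ 2 := by
        have hKK : (K:ℝ) ≤ (K:ℝ) ^ 2 := by nlinarith
        have := mul_le_mul_of_nonneg_left hKK hρ.le
        nlinarith [sq_nonneg ((K:ℝ))]
      have h2 : (0:ℝ) < ρ * L := by positivity
      nlinarith [mul_le_mul_of_nonneg_left h1 h2.le]
    linarith
  calc _ ≤ _ := hmono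
    _ = 1 + (K : ℝ) / (ρ * L) := hval
    _ ≤ _ := hfinal
end

section
/- Let f and g be probability densities on S with M₁ ≤ f(x) ≤ M₂ and g(x) ≤ M₂ for all x ∈ S, where 0 < M₁ ≤ M₂, and let ρ > 0. Then δ_ρ(f,g) ≥ 1 + (ρ M₁²/(M₂³ (1+ρ)²)) ∫_S (g(x) − f(x))² dx. -/
open MeasureTheory

theorem stmt_12 (d : ℕ) (S : Set (EuclideanSpace ℝ (Fin d))) (hS : MeasurableSet S)
    (f g : EuclideanSpace ℝ (Fin d) → ℝ) (ρ M₁ M₂ : ℝ) (hρ : 0 < ρ)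
    (hM₁ : 0 < M₁) (hM₁₂ : M₁ ≤ M₂)
    (hfm : Measurable f) (hgm : Measurable g)
    (hflb : ∀ x ∈ S, M₁ ≤ f x) (hfub : ∀ x ∈ S, f x ≤ M₂)
    (hg0 : ∀ x ∈ S, 0 ≤ g x) (hgub : ∀ x ∈ S, g x ≤ M₂)
    (hfi : IntegrableOn f S) (hgi : IntegrableOn g S)
    (hf1 : ∫ x in S, f x = 1) (hg1 : ∫ x in S, g x = 1)
    (hint : IntegrableOn (fun x => (ρ * f x ^ 2 + g x ^ 2) / (ρ * f x + g x)) S)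
    (hint2 : IntegrableOn (fun x => (g x - f x) ^ 2) S) :
    ∫ x in S, (ρ * f x ^ 2 + g x ^ 2) / (ρ * f x + g x) ≥
      1 + (ρ * M₁ ^ 2 / (M₂ ^ 3 * (1 + ρ) ^ 2)) * ∫ x in S, (g x - f x) ^ 2 := by
  set c : ℝ := ρ * M₁ ^ 2 / (M₂ ^ 3 * (1 + ρ) ^ 2) with hc
  have hM₂ : 0 < M₂ := lt_of_lt_of_le hM₁ hM₁₂
  have hρ1 : (0:ℝ) < 1 + ρ := by linarith
  -- pointwise inequality
  have key : ∀ x ∈ S, (ρ * f x + g x) / (1 + ρ) + c * (g x - f x) ^ 2 ≤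
      (ρ * f x ^ 2 + g x ^ 2) / (ρ * f x + g x) := by
    intro x hx
    set a := f x
    set b := g x
    have ha1 : M₁ ≤ a := hflb x hx
    have ha2 : a ≤ M₂ := hfub x hx
    have hb0 : 0 ≤ b := hg0 x hx
    have hb2 : b ≤ M₂ := hgub x hx
    have hpos : 0 < ρ * a + b := by nlinarith
    have hub : ρ * a + b ≤ (1 + ρ) * M₂ := by nlinarith
    have hid : (ρ * a ^ 2 + b ^ 2) / (ρ * a + b)
        = (ρ * a + b) / (1 + ρ) + ρ * (a - b) ^ 2 / ((1 + ρ) * (ρ * a + b)) := by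
      field_simp
      ring
    rw [hid]
    have h1 : c * (b - a) ^ 2 ≤ ρ * (a - b) ^ 2 / ((1 + ρ) * (ρ * a + b)) := by
      rw [hc, div_mul_eq_mul_div, div_le_div_iff₀ (by positivity) (by positivity)]
      have hM12sq : M₁ ^ 2 ≤ M₂ ^ 2 := by nlinarith
      nlinarith [mul_le_mul_of_nonneg_left hub
          (show (0:ℝ) ≤ ρ * (a - b) ^ 2 * (1 + ρ) * M₁ ^ 2 by positivity),
        mul_le_mul_of_nonneg_left hM12sq
          (show (0:ℝ) ≤ ρ * (a - b) ^ 2 * (1 + ρ) ^ 2 * M₂ by positivity)]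
    linarith
  -- integrability of the lower function
  have h1a : IntegrableOn (fun x => ρ * f x) S := by exact hfi.const_mul ρ
  have h1 : IntegrableOn (fun x => (ρ * f x + g x) / (1 + ρ)) S := by
    exact (h1a.add hgi).div_const (1 + ρ)
  have h2 : IntegrableOn (fun x => c * (g x - f x) ^ 2) S := by exact hint2.const_mul c
  have hlo : IntegrableOn (fun x => (ρ * f x + g x) / (1 + ρ) + c * (g x - f x) ^ 2) S := by
    exact h1.add h2
  have hmono := setIntegral_mono_on hlo hint hS key
  have hcalc : ∫ x in S, ((ρ * f x + g x) / (1 + ρ) + c * (g x - f x) ^ 2)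
      = 1 + c * ∫ x in S, (g x - f x) ^ 2 := by
    rw [integral_add h1 h2, integral_div, integral_add h1a hgi, integral_const_mul,
      integral_const_mul, hf1, hg1]
    field_simp
    ring
  rw [hcalc] at hmono
  exact hmono
end

section
/- Let f and g be probability densities on S with M₁ ≤ f ≤ M₂ and g ≤ M₂ on S (0 < M₁ ≤ M₂), let ρ > 0, K ≥ 1, L > 0, and set ε² = 2 M₂³ (1+ρ)³ K² / (M₁² ρ³ L). If ∫_S (g(x) − f(x))² dx ≥ ε², then δ_ρ(f,g) ≥ 1 + 2(1+ρ)K²/(Lρ²); in particular, for any ℓ ≥ 1, (ℓρ/(1+ρ)²)·δ_ρ(f,g) ≥ γ + ℓK²/(Lρ(1+ρ)), where γ = (ℓρ/(1+ρ)²)(1 + (1+ρ)K²/(Lρ²)). -/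
open MeasureTheory

theorem stmt_13 (d : ℕ) (S : Set (EuclideanSpace ℝ (Fin d))) (hS : MeasurableSet S)
    (f g : EuclideanSpace ℝ (Fin d) → ℝ) (ρ M₁ M₂ K L ℓ : ℝ) (hρ : 0 < ρ)
    (hM₁ : 0 < M₁) (hM₁₂ : M₁ ≤ M₂) (hK : 1 ≤ K) (hL : 0 < L) (hℓ : 1 ≤ ℓ)
    (hfm : Measurable f) (hgm : Measurable g)
    (hflb : ∀ x ∈ S, M₁ ≤ f x) (hfub : ∀ x ∈ S, f x ≤ M₂)
    (hg0 : ∀ x ∈ S, 0 ≤ g x) (hgub : ∀ x ∈ S, g x ≤ M₂)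
    (hfi : IntegrableOn f S) (hgi : IntegrableOn g S)
    (hf1 : ∫ x in S, f x = 1) (hg1 : ∫ x in S, g x = 1)
    (hint : IntegrableOn (fun x => (ρ * f x ^ 2 + g x ^ 2) / (ρ * f x + g x)) S)
    (hint2 : IntegrableOn (fun x => (g x - f x) ^ 2) S)
    (hsep : ∫ x in S, (g x - f x) ^ 2 ≥
      2 * M₂ ^ 3 * (1 + ρ) ^ 3 * K ^ 2 / (M₁ ^ 2 * ρ ^ 3 * L)) :
    (∫ x in S, (ρ * f x ^ 2 + g x ^ 2) / (ρ * f x + g x) ≥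
        1 + 2 * (1 + ρ) * K ^ 2 / (L * ρ ^ 2)) ∧
    ((ℓ * ρ / (1 + ρ) ^ 2) *
        ∫ x in S, (ρ * f x ^ 2 + g x ^ 2) / (ρ * f x + g x) ≥
      (ℓ * ρ / (1 + ρ) ^ 2) * (1 + (1 + ρ) * K ^ 2 / (L * ρ ^ 2)) +
        ℓ * K ^ 2 / (L * ρ * (1 + ρ))) := by
  have hρ1 : (0:ℝ) < 1 + ρ := by linarith
  have hM₂ : (0:ℝ) < M₂ := lt_of_lt_of_le hM₁ hM₁₂
  set c : ℝ := ρ / ((1 + ρ) ^ 2 * M₂) with hc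
  have hcpos : 0 < c := by positivity
  -- pointwise bound
  have key : ∀ x ∈ S, (ρ * f x + g x) / (1 + ρ) + c * (g x - f x) ^ 2 ≤
      (ρ * f x ^ 2 + g x ^ 2) / (ρ * f x + g x) := by
    intro x hx
    have hF1 := hflb x hx
    have hF2 := hfub x hx
    have hG0 := hg0 x hx
    have hG2 := hgub x hx
    have hden : 0 < ρ * f x + g x := by nlinarith
    have hdenM : ρ * f x + g x ≤ (1 + ρ) * M₂ := by nlinarith
    rw [div_add' _ _ _ (ne_of_gt hρ1), div_le_div_iff₀ (by positivity) hden]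
    have h2 : c * (g x - f x) ^ 2 * (1 + ρ) * (ρ * f x + g x) ≤
        c * (g x - f x) ^ 2 * (1 + ρ) * ((1 + ρ) * M₂) :=
      mul_le_mul_of_nonneg_left hdenM (by positivity)
    have h3 : c * (g x - f x) ^ 2 * (1 + ρ) * ((1 + ρ) * M₂) = ρ * (g x - f x) ^ 2 := by
      have : c * (g x - f x) ^ 2 * (1 + ρ) * ((1 + ρ) * M₂) =
          (g x - f x) ^ 2 * (c * ((1 + ρ) ^ 2 * M₂)) := by ring
      rw [this, hc]; field_simp
    nlinarith [h2, h3, sq_nonneg (f x - g x)]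
  -- integral bound
  have hRHSint : IntegrableOn
      (fun x => (ρ * f x + g x) / (1 + ρ) + c * (g x - f x) ^ 2) S := by
    exact (((hfi.const_mul ρ).add hgi).div_const (1 + ρ)).add (hint2.const_mul c)
  have hmono : ∫ x in S, ((ρ * f x + g x) / (1 + ρ) + c * (g x - f x) ^ 2) ≤
      ∫ x in S, (ρ * f x ^ 2 + g x ^ 2) / (ρ * f x + g x) :=
    setIntegral_mono_on hRHSint hint hS key
  have hcalc : ∫ x in S, ((ρ * f x + g x) / (1 + ρ) + c * (g x - f x) ^ 2) =
      1 + c * ∫ x in S, (g x - f x) ^ 2 := by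
    have e : ∀ x : EuclideanSpace ℝ (Fin d), (ρ * f x + g x) / (1 + ρ) + c * (g x - f x) ^ 2
        = (ρ / (1 + ρ)) * f x + ((1 / (1 + ρ)) * g x + c * (g x - f x) ^ 2) := by
      intro x; field_simp; ring
    simp_rw [e]
    have A : IntegrableOn (fun x => (1 / (1 + ρ)) * g x + c * (g x - f x) ^ 2) S :=
      (hgi.const_mul _).add (hint2.const_mul c)
    have B : IntegrableOn (fun x => (ρ / (1 + ρ)) * f x) S := hfi.const_mul _
    have C : IntegrableOn (fun x => (1 / (1 + ρ)) * g x) S := hgi.const_mul _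
    have D : IntegrableOn (fun x => c * (g x - f x) ^ 2) S := hint2.const_mul c
    rw [integral_add B A, integral_add C D,
      integral_const_mul, integral_const_mul, integral_const_mul, hf1, hg1]
    field_simp
    ring
  have hε : c * (2 * M₂ ^ 3 * (1 + ρ) ^ 3 * K ^ 2 / (M₁ ^ 2 * ρ ^ 3 * L)) ≥
      2 * (1 + ρ) * K ^ 2 / (L * ρ ^ 2) := by
    have key2 : c * (2 * M₂ ^ 3 * (1 + ρ) ^ 3 * K ^ 2 / (M₁ ^ 2 * ρ ^ 3 * L)) =
        2 * (1 + ρ) * K ^ 2 / (L * ρ ^ 2) * (M₂ ^ 2 / M₁ ^ 2) := by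
      rw [hc]; field_simp
    have h1 : (1:ℝ) ≤ M₂ ^ 2 / M₁ ^ 2 := by
      rw [le_div_iff₀ (by positivity)]; nlinarith
    calc 2 * (1 + ρ) * K ^ 2 / (L * ρ ^ 2)
        = 2 * (1 + ρ) * K ^ 2 / (L * ρ ^ 2) * 1 := by ring
      _ ≤ 2 * (1 + ρ) * K ^ 2 / (L * ρ ^ 2) * (M₂ ^ 2 / M₁ ^ 2) := by
          apply mul_le_mul_of_nonneg_left h1 (by positivity)
      _ = _ := key2.symm
  have main : ∫ x in S, (ρ * f x ^ 2 + g x ^ 2) / (ρ * f x + g x) ≥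
      1 + 2 * (1 + ρ) * K ^ 2 / (L * ρ ^ 2) := by
    have h2 : c * ∫ x in S, (g x - f x) ^ 2 ≥
        c * (2 * M₂ ^ 3 * (1 + ρ) ^ 3 * K ^ 2 / (M₁ ^ 2 * ρ ^ 3 * L)) :=
      mul_le_mul_of_nonneg_left hsep hcpos.le
    calc 1 + 2 * (1 + ρ) * K ^ 2 / (L * ρ ^ 2)
        ≤ 1 + c * ∫ x in S, (g x - f x) ^ 2 := by linarith [le_trans hε h2]
      _ ≤ _ := by rw [← hcalc]; exact hmono
  refine ⟨main, ?_⟩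
  have hfac : 0 < ℓ * ρ / (1 + ρ) ^ 2 := by positivity
  have := mul_le_mul_of_nonneg_left main hfac.le
  have hz : (ℓ * ρ / (1 + ρ) ^ 2) * ((1 + ρ) * K ^ 2 / (L * ρ ^ 2)) =
      ℓ * K ^ 2 / (L * ρ * (1 + ρ)) := by
    rw [div_mul_div_comm, div_eq_div_iff (by positivity) (by positivity)]
    ring
  have halg : (ℓ * ρ / (1 + ρ) ^ 2) * (1 + 2 * (1 + ρ) * K ^ 2 / (L * ρ ^ 2)) =
      (ℓ * ρ / (1 + ρ) ^ 2) * (1 + (1 + ρ) * K ^ 2 / (L * ρ ^ 2)) +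
        ℓ * K ^ 2 / (L * ρ * (1 + ρ)) := by
    have h2 : (1:ℝ) + 2 * (1 + ρ) * K ^ 2 / (L * ρ ^ 2) =
        (1 + (1 + ρ) * K ^ 2 / (L * ρ ^ 2)) + (1 + ρ) * K ^ 2 / (L * ρ ^ 2) := by ring
    rw [h2, mul_add, hz]
  linarith [this]
end

section
/- Let f and g be probability densities on S with f ≤ M₂ and g ≤ M₂ on S, f > 0 on S, let ρ > 0, κ > 0, K ≥ 1, L > 0, and set ε̃² = 2 M₂³ (1+ρ)³ K² / (ρ³ L). If ∫_{{x ∈ S : f(x) > κ}} (g(x) − f(x))² dx ≥ ε̃²/κ², then δ_ρ(f,g) ≥ 1 + 2(1+ρ)K²/(Lρ²). -/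
open MeasureTheory

theorem stmt_14 (d : ℕ) (S : Set (EuclideanSpace ℝ (Fin d))) (hS : MeasurableSet S)
    (f g : EuclideanSpace ℝ (Fin d) → ℝ) (ρ M₂ K L κ : ℝ) (hρ : 0 < ρ)
    (hM₂ : 0 < M₂) (hK : 1 ≤ K) (hL : 0 < L) (hκ : 0 < κ)
    (hfm : Measurable f) (hgm : Measurable g)
    (hf0 : ∀ x ∈ S, 0 < f x) (hfub : ∀ x ∈ S, f x ≤ M₂)
    (hg0 : ∀ x ∈ S, 0 ≤ g x) (hgub : ∀ x ∈ S, g x ≤ M₂)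
    (hfi : IntegrableOn f S) (hgi : IntegrableOn g S)
    (hf1 : ∫ x in S, f x = 1) (hg1 : ∫ x in S, g x = 1)
    (hint : IntegrableOn (fun x => (ρ * f x ^ 2 + g x ^ 2) / (ρ * f x + g x)) S)
    (hint2 : IntegrableOn (fun x => (g x - f x) ^ 2) S)
    (hsep : ∫ x in {x ∈ S | κ < f x}, (g x - f x) ^ 2 ≥
      (2 * M₂ ^ 3 * (1 + ρ) ^ 3 * K ^ 2 / (ρ ^ 3 * L)) / κ ^ 2) :
    ∫ x in S, (ρ * f x ^ 2 + g x ^ 2) / (ρ * f x + g x) ≥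
      1 + 2 * (1 + ρ) * K ^ 2 / (L * ρ ^ 2) := by
  have hK0 : (0:ℝ) < K := by linarith
  have h1ρ : (0:ℝ) < 1 + ρ := by linarith
  by_cases hκM : κ ≤ M₂
  · have hden : ∀ x ∈ S, 0 < ρ * f x + g x := by
      intro x hx
      have h1 := hf0 x hx; have h2 := hg0 x hx
      nlinarith
    have hid : ∀ x ∈ S, (ρ * f x ^ 2 + g x ^ 2) / (ρ * f x + g x)
        = (ρ * f x + g x) / (1 + ρ) + ρ * (g x - f x) ^ 2 / ((1 + ρ) * (ρ * f x + g x)) := by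
      intro x hx
      have h := hden x hx
      field_simp
      ring
    have hi1 : IntegrableOn (fun x => (ρ * f x + g x) / (1 + ρ)) S :=
      ((hfi.const_mul ρ).add hgi).div_const _
    have hi2 : IntegrableOn (fun x => ρ * (g x - f x) ^ 2 / ((1 + ρ) * (ρ * f x + g x))) S := by
      have hsub : IntegrableOn (fun x => (ρ * f x ^ 2 + g x ^ 2) / (ρ * f x + g x)
          - (ρ * f x + g x) / (1 + ρ)) S := hint.sub hi1
      exact hsub.congr_fun (fun x hx => by have := hid x hx; linarith) hS
    have hsplit : ∫ x in S, (ρ * f x ^ 2 + g x ^ 2) / (ρ * f x + g x)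
        = (∫ x in S, (ρ * f x + g x) / (1 + ρ))
          + ∫ x in S, ρ * (g x - f x) ^ 2 / ((1 + ρ) * (ρ * f x + g x)) := by
      rw [← integral_add hi1 hi2]
      exact setIntegral_congr_fun hS hid
    have hI1 : ∫ x in S, (ρ * f x + g x) / (1 + ρ) = 1 := by
      have : ∫ x in S, (ρ * f x + g x) / (1 + ρ)
          = (∫ x in S, (ρ * f x + g x)) / (1 + ρ) := integral_div _ _
      rw [this, integral_add (hfi.const_mul ρ) hgi, integral_const_mul, hf1, hg1]
      field_simp
      ring
    set c : ℝ := ρ / ((1 + ρ) ^ 2 * M₂) with hc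
    have hcpos : 0 < c := by positivity
    have hmono : ∫ x in S, c * (g x - f x) ^ 2
        ≤ ∫ x in S, ρ * (g x - f x) ^ 2 / ((1 + ρ) * (ρ * f x + g x)) := by
      apply setIntegral_mono_on (hint2.const_mul _) hi2 hS
      intro x hx
      have hd := hden x hx
      have hfu := hfub x hx; have hgu := hgub x hx
      have hub : ρ * f x + g x ≤ (1 + ρ) * M₂ := by nlinarith
      rw [hc, div_mul_eq_mul_div, div_le_div_iff₀ (by positivity) (by positivity)]
      nlinarith [sq_nonneg (g x - f x), mul_nonneg (mul_nonneg hρ.le (sq_nonneg (g x - f x))) h1ρ.le]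
    have hsubset : ∫ x in {x ∈ S | κ < f x}, (g x - f x) ^ 2 ≤ ∫ x in S, (g x - f x) ^ 2 := by
      apply setIntegral_mono_set hint2
      · filter_upwards with x using sq_nonneg _
      · exact HasSubset.Subset.eventuallyLE (fun x hx => hx.1)
    have hIset : ∫ x in S, c * (g x - f x) ^ 2
        ≥ c * ((2 * M₂ ^ 3 * (1 + ρ) ^ 3 * K ^ 2 / (ρ ^ 3 * L)) / κ ^ 2) := by
      rw [integral_const_mul]
      apply mul_le_mul_of_nonneg_left _ hcpos.le
      linarith
    have harith : 2 * (1 + ρ) * K ^ 2 / (L * ρ ^ 2)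
        ≤ c * ((2 * M₂ ^ 3 * (1 + ρ) ^ 3 * K ^ 2 / (ρ ^ 3 * L)) / κ ^ 2) := by
      have heq : c * ((2 * M₂ ^ 3 * (1 + ρ) ^ 3 * K ^ 2 / (ρ ^ 3 * L)) / κ ^ 2)
          = (2 * (1 + ρ) * K ^ 2 / (L * ρ ^ 2)) * (M₂ ^ 2 / κ ^ 2) := by
        rw [hc]; field_simp
      rw [heq]
      have h1 : (1:ℝ) ≤ M₂ ^ 2 / κ ^ 2 := by
        rw [le_div_iff₀ (by positivity)]; nlinarith
      exact le_mul_of_one_le_right (by positivity) h1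
    rw [ge_iff_le, hsplit, hI1]
    linarith
  · exfalso
    push_neg at hκM
    have hempty : {x ∈ S | κ < f x} = ∅ := by
      ext x
      simp only [Set.mem_setOf_eq, Set.mem_empty_iff_false, iff_false, not_and]
      intro hx hfx
      exact absurd (hfub x hx) (by linarith)
    rw [hempty] at hsep
    simp only [Measure.restrict_empty, integral_zero_measure] at hsep
    have hpos : 0 < (2 * M₂ ^ 3 * (1 + ρ) ^ 3 * K ^ 2 / (ρ ^ 3 * L)) / κ ^ 2 := by positivity
    linarith
end

section
/- Let f and g be probability densities on S with f ≤ M₂ and g ≤ M₂ on S, f > 0 on S, and ρ > 0. Then δ_ρ(f,g) ≥ 1 + (ρ/(M₂³(1+ρ)²)) ∫_S (g(x) − f(x))² f(x)² dx. -/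
open MeasureTheory

lemma key_pt (ρ M₂ s t : ℝ) (hρ : 0 < ρ) (hM₂ : 0 < M₂) (hs : 0 < s) (hsM : s ≤ M₂)
    (ht : 0 ≤ t) (htM : t ≤ M₂) :
    s + (t - s) / (1 + ρ) + ρ / (M₂ ^ 3 * (1 + ρ) ^ 2) * ((t - s) ^ 2 * s ^ 2) ≤
      (ρ * s ^ 2 + t ^ 2) / (ρ * s + t) := by
  have hst : 0 < ρ * s + t := by positivity
  have h1ρ : (0:ℝ) < 1 + ρ := by linarith
  rw [← sub_nonneg]
  have heq : (ρ * s ^ 2 + t ^ 2) / (ρ * s + t) -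
      (s + (t - s) / (1 + ρ) + ρ / (M₂ ^ 3 * (1 + ρ) ^ 2) * ((t - s) ^ 2 * s ^ 2)) =
      ρ * (t - s) ^ 2 * (M₂ ^ 3 * (1 + ρ) - s ^ 2 * (ρ * s + t)) /
        ((1 + ρ) ^ 2 * M₂ ^ 3 * (ρ * s + t)) := by
    field_simp
    ring
  rw [heq]
  have h2 : s ^ 2 ≤ M₂ ^ 2 := by nlinarith
  have h3 : ρ * s + t ≤ (1 + ρ) * M₂ := by nlinarith
  have h4 : s ^ 2 * (ρ * s + t) ≤ M₂ ^ 2 * ((1 + ρ) * M₂) :=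
    mul_le_mul h2 h3 (le_of_lt hst) (by positivity)
  have h5 : 0 ≤ M₂ ^ 3 * (1 + ρ) - s ^ 2 * (ρ * s + t) := by nlinarith
  positivity

theorem stmt_15 (d : ℕ) (S : Set (EuclideanSpace ℝ (Fin d))) (hS : MeasurableSet S)
    (f g : EuclideanSpace ℝ (Fin d) → ℝ) (ρ M₂ : ℝ) (hρ : 0 < ρ) (hM₂ : 0 < M₂)
    (hfm : Measurable f) (hgm : Measurable g)
    (hf0 : ∀ x ∈ S, 0 < f x) (hfub : ∀ x ∈ S, f x ≤ M₂)
    (hg0 : ∀ x ∈ S, 0 ≤ g x) (hgub : ∀ x ∈ S, g x ≤ M₂)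
    (hfi : IntegrableOn f S) (hgi : IntegrableOn g S)
    (hf1 : ∫ x in S, f x = 1) (hg1 : ∫ x in S, g x = 1)
    (hint : IntegrableOn (fun x => (ρ * f x ^ 2 + g x ^ 2) / (ρ * f x + g x)) S)
    (hint2 : IntegrableOn (fun x => (g x - f x) ^ 2 * f x ^ 2) S) :
    ∫ x in S, (ρ * f x ^ 2 + g x ^ 2) / (ρ * f x + g x) ≥
      1 + (ρ / (M₂ ^ 3 * (1 + ρ) ^ 2)) * ∫ x in S, (g x - f x) ^ 2 * f x ^ 2 := by
  have h1ρ : (0:ℝ) < 1 + ρ := by linarith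
  set c : ℝ := ρ / (M₂ ^ 3 * (1 + ρ) ^ 2) with hc
  have hi1 : IntegrableOn (fun x => (g x - f x) / (1 + ρ)) S :=
    (hgi.sub hfi).div_const _
  have hi2 : IntegrableOn (fun x => c * ((g x - f x) ^ 2 * f x ^ 2)) S :=
    hint2.const_mul c
  have hlow : IntegrableOn
      (fun x => f x + (g x - f x) / (1 + ρ) + c * ((g x - f x) ^ 2 * f x ^ 2)) S :=
    (hfi.add hi1).add hi2
  have hmono := setIntegral_mono_on hlow hint hS (fun x hx =>
    key_pt ρ M₂ (f x) (g x) hρ hM₂ (hf0 x hx) (hfub x hx) (hg0 x hx) (hgub x hx))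
  have hcalc : ∫ x in S, (f x + (g x - f x) / (1 + ρ) + c * ((g x - f x) ^ 2 * f x ^ 2)) =
      1 + c * ∫ x in S, (g x - f x) ^ 2 * f x ^ 2 := by
    have hfi1 : IntegrableOn (fun x => f x + (g x - f x) / (1 + ρ)) S := hfi.add hi1
    rw [integral_add hfi1 hi2, integral_add hfi hi1, integral_const_mul]
    have : ∫ x in S, (g x - f x) / (1 + ρ) = (∫ x in S, (g x - f x)) / (1 + ρ) :=
      integral_div _ _
    rw [this, integral_sub hgi hfi, hf1, hg1]
    ring
  rw [hcalc] at hmono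
  exact hmono
end

section
/- For probability densities f, g on S with ρf + g > 0 on S and ρ > 0, δ_ρ(f,g) = 1 if and only if f = g almost everywhere on S. -/
open MeasureTheory

theorem stmt_17 (d : ℕ) (S : Set (EuclideanSpace ℝ (Fin d))) (hS : MeasurableSet S)
    (f g : EuclideanSpace ℝ (Fin d) → ℝ) (ρ : ℝ) (hρ : 0 < ρ)
    (hfm : Measurable f) (hgm : Measurable g)
    (hf0 : ∀ x ∈ S, 0 ≤ f x) (hg0 : ∀ x ∈ S, 0 ≤ g x)
    (hfi : IntegrableOn f S) (hgi : IntegrableOn g S)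
    (hf1 : ∫ x in S, f x = 1) (hg1 : ∫ x in S, g x = 1)
    (hpos : ∀ x ∈ S, 0 < ρ * f x + g x)
    (hint : IntegrableOn (fun x => (ρ * f x ^ 2 + g x ^ 2) / (ρ * f x + g x)) S) :
    ∫ x in S, (ρ * f x ^ 2 + g x ^ 2) / (ρ * f x + g x) = 1 ↔
      ∀ᵐ x ∂(volume.restrict S), f x = g x := by
  have h1ρ : (0:ℝ) < 1 + ρ := by linarith
  have key : ∀ x ∈ S, (ρ * f x ^ 2 + g x ^ 2) / (ρ * f x + g x)
      = (ρ * f x + g x) / (1 + ρ)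
        + (ρ / (1 + ρ)) * ((f x - g x) ^ 2 / (ρ * f x + g x)) := by
    intro x hx
    have hd : (ρ * f x + g x) ≠ 0 := (hpos x hx).ne'
    field_simp
    ring
  have hKint : IntegrableOn (fun x => (ρ * f x + g x) / (1 + ρ)) S :=
    ((hfi.const_mul ρ).add hgi).div_const _
  have hhint : IntegrableOn (fun x => (f x - g x) ^ 2 / (ρ * f x + g x)) S := by
    have h2 : IntegrableOn (fun x => ((1 + ρ) / ρ) *
        ((ρ * f x ^ 2 + g x ^ 2) / (ρ * f x + g x)
          - (ρ * f x + g x) / (1 + ρ))) S :=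
      (hint.sub hKint).const_mul _
    refine h2.congr_fun (fun x hx => ?_) hS
    beta_reduce
    rw [key x hx]
    have hd : (ρ * f x + g x) ≠ 0 := (hpos x hx).ne'
    field_simp
    ring
  have hKval : ∫ x in S, (ρ * f x + g x) / (1 + ρ) = 1 := by
    rw [integral_div, integral_add (hfi.const_mul ρ) hgi, integral_const_mul, hf1, hg1]
    field_simp
    ring
  have hsplit : ∫ x in S, (ρ * f x ^ 2 + g x ^ 2) / (ρ * f x + g x)
      = 1 + (ρ / (1 + ρ)) * ∫ x in S, (f x - g x) ^ 2 / (ρ * f x + g x) := by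
    rw [setIntegral_congr_fun hS (fun x hx => key x hx),
      integral_add hKint (hhint.const_mul _), hKval, integral_const_mul]
  have hc : ρ / (1 + ρ) ≠ 0 := by positivity
  have hnn : 0 ≤ᵐ[volume.restrict S] fun x => (f x - g x) ^ 2 / (ρ * f x + g x) := by
    filter_upwards [ae_restrict_mem hS] with x hx
    exact div_nonneg (sq_nonneg _) (hpos x hx).le
  have hzero : (∫ x in S, (f x - g x) ^ 2 / (ρ * f x + g x) = 0)
      ↔ (∀ᵐ x ∂(volume.restrict S), f x = g x) := by
    rw [integral_eq_zero_iff_of_nonneg_ae hnn hhint]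
    constructor
    · intro h
      rw [Filter.EventuallyEq, ae_restrict_iff' hS] at h
      rw [ae_restrict_iff' hS]
      filter_upwards [h] with x hx hxS
      have hd : (ρ * f x + g x) ≠ 0 := (hpos x hxS).ne'
      have := hx hxS
      simp only [Pi.zero_apply, div_eq_zero_iff, hd, or_false] at this
      have := pow_eq_zero_iff (n := 2) (by norm_num) |>.mp this
      linarith [sub_eq_zero.mp this]
    · intro h
      rw [ae_restrict_iff' hS] at h
      rw [Filter.EventuallyEq, ae_restrict_iff' hS]
      filter_upwards [h] with x hx hxS
      simp [hx hxS]
  rw [hsplit]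
  rw [← hzero]
  constructor
  · intro h
    have : (ρ / (1 + ρ)) * ∫ x in S, (f x - g x) ^ 2 / (ρ * f x + g x) = 0 := by linarith
    exact (mul_eq_zero.mp this).resolve_left hc
  · intro h
    rw [h, mul_zero, add_zero]
end
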